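/- arXiv:2604.18357 — 5 statements merged into one kernel-verified Lean document; each statement's English description precedes it below -/
import Mathlib

section
/- Consider the deterministic SPRING recursion θ_{k+1} = θ_k + η_k Δθ_k with Δθ_k = (λI + S(θ_k))⁻¹(λμ Δθ_{k−1} − (1/2)g(θ_k)), where g = ∇L, each S(θ) is symmetric positive semidefinite, L is bounded below by E*, g is C_g-Lipschitz, the step-sizes satisfy 0 < η_k ≤ η_{k−1} and η₀ ≤ 2λ(1−μ)/C_g, and 0 ≤ μ < 1. Then the discrete energy F_k := L(θ_k) + λμ η_k ‖Δθ_{k−1}‖² is monotonically non-increasing, and ∑_{k=0}^∞ η_k‖Δθ_k‖² < ∞. -/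
/-!
Testing the recursion against `Δθ_k` and using `⟨S Δθ_k, Δθ_k⟩ ≥ 0` and `2⟨a, b⟩ ≤ ‖a‖² + ‖b‖²` bounds
`⟨g(θ_k), Δθ_k⟩` by `λμ (‖Δθ_{k-1}‖² + ‖Δθ_k‖²) - 2λ‖Δθ_k‖²`. Inserted into the descent lemma
`L(θ + v) ≤ L(θ) + ⟨g(θ), v⟩ + (C_g/2)‖v‖²`, with `C_g η_k ≤ 2λ(1-μ)` and `η_{k+1} ≤ η_k`, this gives
`F_{k+1} + λ(1-μ) η_k ‖Δθ_k‖² ≤ F_k`. Since `F_k ≥ E*`, the sum telescopes to a bounded series.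
-/

open InnerProductSpace

section Descent

variable {E : Type*} [NormedAddCommGroup E] [InnerProductSpace ℝ E] [CompleteSpace E]

theorem hasDerivAt_comp_add_smul_gradient {L : E → ℝ} (hL : Differentiable ℝ L) (x v : E)
    (t : ℝ) :
    HasDerivAt (fun s : ℝ => L (x + s • v)) ⟪gradient L (x + t • v), v⟫_ℝ t := by
  have hline : HasDerivAt (fun s : ℝ => x + s • v) v t := by
    simpa using ((hasDerivAt_id t).smul_const v).const_add x
  exact (hasGradientAt_iff_hasFDerivAt.1 (hL _).hasGradientAt).comp_hasDerivAt t hline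

theorem le_add_inner_gradient_add_sq_of_lipschitz_gradient {L : E → ℝ} (hL : Differentiable ℝ L)
    {C : ℝ} (hlip : ∀ a b, ‖gradient L a - gradient L b‖ ≤ C * ‖a - b‖) (x v : E) :
    L (x + v) ≤ L x + ⟪gradient L x, v⟫_ℝ + C / 2 * ‖v‖ ^ 2 := by
  set h : ℝ → ℝ := fun t => L (x + t • v) - t * ⟪gradient L x, v⟫_ℝ - C / 2 * t ^ 2 * ‖v‖ ^ 2
  have hderiv : ∀ t, HasDerivAt h
      (⟪gradient L (x + t • v), v⟫_ℝ - ⟪gradient L x, v⟫_ℝ - C * t * ‖v‖ ^ 2) t := by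
    intro t
    have hsq := ((hasDerivAt_pow 2 t).const_mul (C / 2)).mul_const (‖v‖ ^ 2)
    refine (((hasDerivAt_comp_add_smul_gradient hL x v t).sub
      ((hasDerivAt_id' t).mul_const ⟪gradient L x, v⟫_ℝ)).sub hsq).congr_deriv ?_
    push_cast
    ring
  have hanti : AntitoneOn h (Set.Ici 0) := by
    refine antitoneOn_of_hasDerivWithinAt_nonpos (convex_Ici 0)
      (fun t _ => (hderiv t).continuousAt.continuousWithinAt)
      (fun t _ => (hderiv t).hasDerivWithinAt) fun t ht => ?_
    rw [interior_Ici, Set.mem_Ioi] at ht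
    have hgrad : ‖gradient L (x + t • v) - gradient L x‖ ≤ C * (t * ‖v‖) := by
      simpa [norm_smul, abs_of_pos ht] using hlip (x + t • v) x
    have hcs := real_inner_le_norm (gradient L (x + t • v) - gradient L x) v
    rw [inner_sub_left] at hcs
    nlinarith [mul_le_mul_of_nonneg_right hgrad (norm_nonneg v)]
  have := hanti Set.self_mem_Ici (Set.mem_Ici.2 zero_le_one) zero_le_one
  simp only [h, one_smul, zero_smul, add_zero, one_mul, zero_mul, one_pow, sub_zero,
    ne_eq, OfNat.ofNat_ne_zero, not_false_eq_true, zero_pow, mul_zero] at this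
  linarith

end Descent

theorem summable_of_add_le_of_forall_le {F a : ℕ → ℝ} {B : ℝ} (ha : ∀ k, 0 ≤ a k)
    (hF : ∀ k, F (k + 1) + a k ≤ F k) (hB : ∀ k, B ≤ F k) : Summable a := by
  have hsum : ∀ N, ∑ k ∈ Finset.range N, a k ≤ F 0 - F N := by
    intro N
    induction N with
    | zero => simp
    | succ N ih => rw [Finset.sum_range_succ]; linarith [hF N]
  exact summable_of_sum_range_le (c := F 0 - B) ha fun N => (hsum N).trans (by linarith [hB N])

theorem spring_energy_step {E : Type*} [NormedAddCommGroup E] [InnerProductSpace ℝ E]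
    [CompleteSpace E] {L : E → ℝ} (hL : Differentiable ℝ L) {C lam mu η η' : ℝ}
    (hlip : ∀ a b, ‖gradient L a - gradient L b‖ ≤ C * ‖a - b‖)
    (hlam : 0 ≤ lam) (hmu : 0 ≤ mu) (hη : 0 ≤ η) (hη' : η' ≤ η)
    (hCη : C * η ≤ 2 * lam * (1 - mu)) {θ d₀ d s : E} (hs : 0 ≤ ⟪s, d⟫_ℝ)
    (hrec : lam • d + s = (lam * mu) • d₀ - (2 : ℝ)⁻¹ • gradient L θ) :
    L (θ + η • d) + lam * mu * η' * ‖d‖ ^ 2 + lam * (1 - mu) * (η * ‖d‖ ^ 2)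
      ≤ L θ + lam * mu * η * ‖d₀‖ ^ 2 := by
  have htest := congrArg (fun w => ⟪w, d⟫_ℝ) hrec
  simp only [inner_add_left, inner_sub_left, real_inner_smul_left,
    real_inner_self_eq_norm_sq] at htest
  have hyoung : 2 * ⟪d₀, d⟫_ℝ ≤ ‖d₀‖ ^ 2 + ‖d‖ ^ 2 := by
    nlinarith [real_inner_le_norm d₀ d, sq_nonneg (‖d₀‖ - ‖d‖)]
  have hinner : ⟪gradient L θ, d⟫_ℝ ≤ lam * mu * (‖d₀‖ ^ 2 + ‖d‖ ^ 2) - 2 * lam * ‖d‖ ^ 2 := by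
    nlinarith [mul_le_mul_of_nonneg_left hyoung (mul_nonneg hlam hmu)]
  have hdescent := le_add_inner_gradient_add_sq_of_lipschitz_gradient hL hlip θ (η • d)
  rw [real_inner_smul_right, norm_smul, Real.norm_of_nonneg hη] at hdescent
  have hd := sq_nonneg ‖d‖
  nlinarith [mul_le_mul_of_nonneg_left hinner hη, mul_le_mul_of_nonneg_right hCη (mul_nonneg hη hd),
    mul_le_mul_of_nonneg_right (mul_le_mul_of_nonneg_left hη' (mul_nonneg hlam hmu)) hd]

theorem stmt5_general {n : ℕ} (lam mu Cg Estar : ℝ) (hlam : 0 < lam) (hmu0 : 0 ≤ mu) (hmu1 : mu < 1)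
    (hCg : 0 < Cg)
    (L : EuclideanSpace ℝ (Fin n) → ℝ) (hdiff : Differentiable ℝ L)
    (hbelow : ∀ θ, Estar ≤ L θ)
    (hlip : ∀ θ θ', ‖gradient L θ - gradient L θ'‖ ≤ Cg * ‖θ - θ'‖)
    (S : EuclideanSpace ℝ (Fin n) → EuclideanSpace ℝ (Fin n) →L[ℝ] EuclideanSpace ℝ (Fin n))
    (hSpos : ∀ θ v, 0 ≤ (inner ℝ (S θ v) v : ℝ))
    (η : ℕ → ℝ) (hηpos : ∀ k, 0 < η k) (hηmono : ∀ k, η (k + 1) ≤ η k)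
    (hη0 : η 0 ≤ 2 * lam * (1 - mu) / Cg)
    (θ D : ℕ → EuclideanSpace ℝ (Fin n))
    (hrec : ∀ k, lam • D (k + 1) + S (θ k) (D (k + 1))
      = (lam * mu) • D k - (2 : ℝ)⁻¹ • gradient L (θ k))
    (hstep : ∀ k, θ (k + 1) = θ k + η k • D (k + 1)) :
    (∀ k, L (θ (k + 1)) + lam * mu * η (k + 1) * ‖D (k + 1)‖ ^ 2
        ≤ L (θ k) + lam * mu * η k * ‖D k‖ ^ 2)
    ∧ Summable (fun k => η k * ‖D (k + 1)‖ ^ 2) := by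
  have hc : 0 < lam * (1 - mu) := mul_pos hlam (by linarith)
  have hdissip : ∀ k, 0 ≤ lam * (1 - mu) * (η k * ‖D (k + 1)‖ ^ 2) := fun k => by
    have := hηpos k; positivity
  have hCgη : ∀ k, Cg * η k ≤ 2 * lam * (1 - mu) := fun k => by
    rw [mul_comm]
    exact mul_le_of_le_div₀ (by positivity) hCg.le
      ((antitone_nat_of_succ_le hηmono (Nat.zero_le k)).trans hη0)
  have hdecay : ∀ k, L (θ (k + 1)) + lam * mu * η (k + 1) * ‖D (k + 1)‖ ^ 2
      + lam * (1 - mu) * (η k * ‖D (k + 1)‖ ^ 2) ≤ L (θ k) + lam * mu * η k * ‖D k‖ ^ 2 :=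
    fun k => hstep k ▸ spring_energy_step hdiff hlip hlam.le hmu0 (hηpos k).le (hηmono k)
      (hCgη k) (hSpos (θ k) (D (k + 1))) (hrec k)
  refine ⟨fun k => (le_add_of_nonneg_right (hdissip k)).trans (hdecay k), ?_⟩
  refine (summable_mul_left_iff hc.ne').1 (summable_of_add_le_of_forall_le
    (F := fun k => L (θ k) + lam * mu * η k * ‖D k‖ ^ 2) (B := Estar) hdissip hdecay ?_)
  intro k
  have := hηpos k
  linarith [hbelow (θ k), show 0 ≤ lam * mu * η k * ‖D k‖ ^ 2 by positivity]

/-- deterministic SPRING. Here `D k` denotes `Δθ_{k-1}`, so that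
`D (k+1) = Δθ_k` and the recursion `(λI + S(θ_k)) Δθ_k = λμ Δθ_{k−1} − (1/2) g(θ_k)` reads
`lam • D (k+1) + S (θ k) (D (k+1)) = (lam*μ) • D k − (1/2) • ∇L(θ k)`.  The discrete energy
`F k = L(θ k) + λ μ η_k ‖Δθ_{k−1}‖²` is non-increasing and `∑ η_k ‖Δθ_k‖² < ∞`. -/
theorem stmt5 {n : ℕ} (lam mu Cg Estar : ℝ) (hlam : 0 < lam) (hmu0 : 0 ≤ mu) (hmu1 : mu < 1)
    (hCg : 0 < Cg)
    (L : EuclideanSpace ℝ (Fin n) → ℝ) (hdiff : Differentiable ℝ L)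
    (hbelow : ∀ θ, Estar ≤ L θ)
    (hlip : ∀ θ θ', ‖gradient L θ - gradient L θ'‖ ≤ Cg * ‖θ - θ'‖)
    (S : EuclideanSpace ℝ (Fin n) → EuclideanSpace ℝ (Fin n) →L[ℝ] EuclideanSpace ℝ (Fin n))
    (hSsymm : ∀ θ v w, (inner ℝ (S θ v) w : ℝ) = inner ℝ v (S θ w))
    (hSpos : ∀ θ v, 0 ≤ (inner ℝ (S θ v) v : ℝ))
    (η : ℕ → ℝ) (hηpos : ∀ k, 0 < η k) (hηmono : ∀ k, η (k + 1) ≤ η k)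
    (hη0 : η 0 ≤ 2 * lam * (1 - mu) / Cg)
    (θ D : ℕ → EuclideanSpace ℝ (Fin n))
    (hrec : ∀ k, lam • D (k + 1) + S (θ k) (D (k + 1))
      = (lam * mu) • D k - (2 : ℝ)⁻¹ • gradient L (θ k))
    (hstep : ∀ k, θ (k + 1) = θ k + η k • D (k + 1)) :
    (∀ k, L (θ (k + 1)) + lam * mu * η (k + 1) * ‖D (k + 1)‖ ^ 2
        ≤ L (θ k) + lam * mu * η k * ‖D k‖ ^ 2)
    ∧ Summable (fun k => η k * ‖D (k + 1)‖ ^ 2) :=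
  stmt5_general lam mu Cg Estar hlam hmu0 hmu1 hCg L hdiff hbelow hlip S hSpos η hηpos hηmono hη0 θ
    D hrec hstep
end

section
/- Under the hypotheses of the deterministic SPRING recursion with 0 ≤ μ < 1 (λ > 0, S(θ) positive semidefinite with ‖S(θ)‖₂ ≤ √C_m uniformly, g C_g-Lipschitz with ‖g(θ)‖ ≤ 2√C_m uniformly, L bounded below, non-increasing step-sizes with η₀ ≤ 2λ(1−μ)/C_g), there exists a constant C > 0 such that for all K ≥ 1, ∑_{k=1}^K η_k ‖g(θ_k)‖² ≤ C. -/
/-!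
With `D (k + 1) = Δθ_k`, the Lyapunov function `L (θ k) + λ μ η_k ‖D k‖²` drops by at least
`λ (1 - μ) η_k ‖D (k + 1)‖²` in each step: the descent lemma for the `C_g`-smooth `L` controls
`L (θ (k + 1)) - L (θ k)`, the recursion together with `S ≥ 0` bounds `⟪g(θ_k), D (k + 1)⟫`, and
the step-size condition absorbs the quadratic term of the descent lemma. As `L ≥ E_GS`, the
weighted increments `η_k ‖D (k + 1)‖²` have bounded partial sums. Solving the recursion for
`g(θ_k)` and using `‖S‖ ≤ √C_m` bounds `η_k ‖g(θ_k)‖²` by two neighbouring weighted increments.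
-/

open Finset InnerProductSpace
open scoped Gradient RealInnerProductSpace

theorem mul_sum_range_le_sub_of_le_sub {V a : ℕ → ℝ} {c m : ℝ}
    (hV : ∀ k, V (k + 1) ≤ V k - c * a k) (hm : ∀ k, m ≤ V k) (N : ℕ) :
    c * ∑ k ∈ range N, a k ≤ V 0 - m :=
  calc c * ∑ k ∈ range N, a k ≤ ∑ k ∈ range N, (V k - V (k + 1)) := by
        rw [mul_sum]; exact sum_le_sum fun k _ ↦ by linarith [hV k]
    _ = V 0 - V N := sum_range_sub' V N
    _ ≤ V 0 - m := by linarith [hm N]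

theorem sum_Icc_le_of_le_mul_add_mul {a b : ℕ → ℝ} {A B B' : ℝ} (ha : ∀ k, 0 ≤ a k)
    (hA : ∀ N, ∑ k ∈ range N, a k ≤ A) (hB : 0 ≤ B) (hB' : 0 ≤ B')
    (hb : ∀ k, b (k + 1) ≤ B * a k + B' * a (k + 1)) (K : ℕ) :
    ∑ k ∈ Icc 1 K, b k ≤ (B + B') * A := by
  have hshift : ∑ k ∈ range K, a (k + 1) ≤ A := by
    have := hA (K + 1)
    rw [sum_range_succ'] at this
    linarith [ha 0]
  calc ∑ k ∈ Icc 1 K, b k = ∑ k ∈ range K, b (k + 1) := by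
        rw [range_eq_Ico, sum_Ico_add', ← Ico_add_one_right_eq_Icc]
    _ ≤ ∑ k ∈ range K, (B * a k + B' * a (k + 1)) := sum_le_sum fun k _ ↦ hb k
    _ = B * ∑ k ∈ range K, a k + B' * ∑ k ∈ range K, a (k + 1) := by
        rw [sum_add_distrib, mul_sum, mul_sum]
    _ ≤ B * A + B' * A := by gcongr; exact hA K
    _ = (B + B') * A := by ring

section Descent

variable {E : Type*} [NormedAddCommGroup E] [InnerProductSpace ℝ E] [CompleteSpace E]

theorem le_add_inner_gradient_add_of_lipschitz {L : E → ℝ} {Cg : ℝ} (hdiff : Differentiable ℝ L)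
    (hlip : ∀ x y, ‖∇ L x - ∇ L y‖ ≤ Cg * ‖x - y‖) (x v : E) :
    L (x + v) ≤ L x + ⟪∇ L x, v⟫ + Cg / 2 * ‖v‖ ^ 2 := by
  have hf (t : ℝ) : HasDerivAt (fun t : ℝ ↦ L (x + t • v)) ⟪∇ L (x + t • v), v⟫ t := by
    have hline : HasDerivAt (fun t : ℝ ↦ x + t • v) v t := by
      simpa using ((hasDerivAt_id t).smul_const v).const_add x
    have := (hdiff (x + t • v)).hasFDerivAt.comp_hasDerivAt t hline
    rwa [← inner_gradient_left] at this
  have hB (t : ℝ) : HasDerivAt (fun t : ℝ ↦ L x + t * ⟪∇ L x, v⟫ + Cg / 2 * t ^ 2 * ‖v‖ ^ 2)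
      (⟪∇ L x, v⟫ + Cg * t * ‖v‖ ^ 2) t := by
    refine ((((hasDerivAt_id' t).mul_const _).const_add (L x)).fun_add
      (((hasDerivAt_pow 2 t).const_mul (Cg / 2)).mul_const (‖v‖ ^ 2))).congr_deriv ?_
    push_cast; ring
  have hbound (t : ℝ) (ht : 0 ≤ t) :
      ⟪∇ L (x + t • v), v⟫ ≤ ⟪∇ L x, v⟫ + Cg * t * ‖v‖ ^ 2 :=
    calc ⟪∇ L (x + t • v), v⟫ = ⟪∇ L x, v⟫ + ⟪∇ L (x + t • v) - ∇ L x, v⟫ := by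
          rw [inner_sub_left]; ring
      _ ≤ ⟪∇ L x, v⟫ + ‖∇ L (x + t • v) - ∇ L x‖ * ‖v‖ := by
          gcongr; exact real_inner_le_norm _ _
      _ ≤ ⟪∇ L x, v⟫ + Cg * ‖t • v‖ * ‖v‖ := by
          gcongr; simpa using hlip (x + t • v) x
      _ = ⟪∇ L x, v⟫ + Cg * t * ‖v‖ ^ 2 := by
          rw [norm_smul, Real.norm_of_nonneg ht]; ring
  simpa using image_le_of_deriv_right_le_deriv_boundary (a := 0) (b := 1)
    (fun t _ ↦ (hf t).continuousAt.continuousWithinAt) (fun t _ ↦ (hf t).hasDerivWithinAt)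
    (by simp) (fun t _ ↦ (hB t).continuousAt.continuousWithinAt)
    (fun t _ ↦ (hB t).hasDerivWithinAt) (fun t ht ↦ hbound t ht.1) (Set.right_mem_Icc.2 zero_le_one)

end Descent

section SpringStep

variable {E : Type*} [NormedAddCommGroup E] [InnerProductSpace ℝ E] {lam mu : ℝ} {d d' g s : E}

theorem eq_of_spring_step (h : lam • d' + s = (lam * mu) • d - (2 : ℝ)⁻¹ • g) :
    g = (2 * (lam * mu)) • d - (2 * lam) • d' - (2 : ℝ) • s := by
  linear_combination (norm := module) (2 : ℝ) • h

theorem inner_le_of_spring_step (h : lam • d' + s = (lam * mu) • d - (2 : ℝ)⁻¹ • g)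
    (hlam : 0 ≤ lam) (hmu : 0 ≤ mu) (hs : 0 ≤ ⟪s, d'⟫) :
    ⟪g, d'⟫ ≤ lam * mu * (‖d‖ ^ 2 + ‖d'‖ ^ 2) - 2 * lam * ‖d'‖ ^ 2 := by
  have hdd' : ⟪d, d'⟫ ≤ (‖d‖ ^ 2 + ‖d'‖ ^ 2) / 2 := by
    nlinarith [real_inner_le_norm d d', sq_nonneg (‖d‖ - ‖d'‖)]
  rw [eq_of_spring_step h]
  simp only [inner_sub_left, real_inner_smul_left, real_inner_self_eq_norm_sq]
  nlinarith [mul_nonneg hlam hmu]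

theorem norm_sq_le_of_spring_step (h : lam • d' + s = (lam * mu) • d - (2 : ℝ)⁻¹ • g)
    (hlam : 0 ≤ lam) (hmu : 0 ≤ mu) {c : ℝ} (hs : ‖s‖ ≤ c * ‖d'‖) :
    ‖g‖ ^ 2 ≤ 8 * (lam * mu) ^ 2 * ‖d‖ ^ 2 + 8 * (lam + c) ^ 2 * ‖d'‖ ^ 2 := by
  have hnorm : ‖g‖ ≤ 2 * (lam * mu) * ‖d‖ + 2 * (lam + c) * ‖d'‖ := by
    rw [eq_of_spring_step h]
    calc _ ≤ ‖(2 * (lam * mu)) • d‖ + ‖(2 * lam) • d'‖ + ‖(2 : ℝ) • s‖ :=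
          norm_sub_le_of_le (norm_sub_le _ _) le_rfl
      _ ≤ _ := by
          rw [norm_smul, norm_smul, norm_smul, Real.norm_of_nonneg (by positivity),
            Real.norm_of_nonneg (by positivity), Real.norm_two]
          linarith
  nlinarith [mul_le_mul hnorm hnorm (norm_nonneg g) ((norm_nonneg g).trans hnorm),
    sq_nonneg (2 * (lam * mu) * ‖d‖ - 2 * (lam + c) * ‖d'‖)]

theorem spring_descent_step [CompleteSpace E] {L : E → ℝ} {Cg η : ℝ} {x : E}
    (hdiff : Differentiable ℝ L) (hlip : ∀ x y, ‖∇ L x - ∇ L y‖ ≤ Cg * ‖x - y‖)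
    (hlam : 0 ≤ lam) (hmu : 0 ≤ mu) (hη : 0 ≤ η) (hηCg : Cg * η ≤ 2 * lam * (1 - mu))
    (h : lam • d' + s = (lam * mu) • d - (2 : ℝ)⁻¹ • ∇ L x) (hs : 0 ≤ ⟪s, d'⟫) :
    L (x + η • d') ≤ L x + lam * mu * (η * ‖d‖ ^ 2) - lam * (η * ‖d'‖ ^ 2) := by
  have hquad : Cg / 2 * ‖η • d'‖ ^ 2 ≤ lam * (1 - mu) * (η * ‖d'‖ ^ 2) := by
    rw [norm_smul, Real.norm_of_nonneg hη]
    nlinarith [mul_le_mul_of_nonneg_right hηCg (mul_nonneg hη (sq_nonneg ‖d'‖))]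
  calc L (x + η • d') ≤ L x + ⟪∇ L x, η • d'⟫ + Cg / 2 * ‖η • d'‖ ^ 2 :=
        le_add_inner_gradient_add_of_lipschitz hdiff hlip x _
    _ ≤ L x + η * (lam * mu * (‖d‖ ^ 2 + ‖d'‖ ^ 2) - 2 * lam * ‖d'‖ ^ 2)
          + lam * (1 - mu) * (η * ‖d'‖ ^ 2) := by
        rw [real_inner_smul_right]
        gcongr
        exact inner_le_of_spring_step h hlam hmu hs
    _ = L x + lam * mu * (η * ‖d‖ ^ 2) - lam * (η * ‖d'‖ ^ 2) := by ring

end SpringStep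

section SpringTrajectory

variable {E : Type*} [NormedAddCommGroup E] [InnerProductSpace ℝ E] [CompleteSpace E]
  {L : E → ℝ} {S : E → E →L[ℝ] E} {lam mu : ℝ} {η : ℕ → ℝ} {θ D : ℕ → E}

theorem spring_sum_le {Cg Egs : ℝ} (hdiff : Differentiable ℝ L)
    (hlip : ∀ x y, ‖∇ L x - ∇ L y‖ ≤ Cg * ‖x - y‖) (hbelow : ∀ x, Egs ≤ L x)
    (hlam : 0 ≤ lam) (hmu : 0 ≤ mu) (hSpos : ∀ x v, 0 ≤ ⟪S x v, v⟫)
    (hη : ∀ k, 0 ≤ η k) (hηmono : ∀ k, η (k + 1) ≤ η k)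
    (hηCg : ∀ k, Cg * η k ≤ 2 * lam * (1 - mu))
    (hrec : ∀ k, lam • D (k + 1) + S (θ k) (D (k + 1))
      = (lam * mu) • D k - (2 : ℝ)⁻¹ • ∇ L (θ k))
    (hstep : ∀ k, θ (k + 1) = θ k + η k • D (k + 1)) (N : ℕ) :
    lam * (1 - mu) * ∑ k ∈ range N, η k * ‖D (k + 1)‖ ^ 2
      ≤ L (θ 0) + lam * mu * (η 0 * ‖D 0‖ ^ 2) - Egs := by
  refine mul_sum_range_le_sub_of_le_sub (V := fun k ↦ L (θ k) + lam * mu * (η k * ‖D k‖ ^ 2))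
    (fun k ↦ ?_) (fun k ↦ ?_) N
  · have hdesc := spring_descent_step hdiff hlip hlam hmu (hη k) (hηCg k) (hrec k) (hSpos _ _)
    rw [← hstep k] at hdesc
    have := mul_le_mul_of_nonneg_left
      (mul_le_mul_of_nonneg_right (hηmono k) (sq_nonneg ‖D (k + 1)‖)) (mul_nonneg hlam hmu)
    linarith
  · have := mul_nonneg (mul_nonneg hlam hmu) (mul_nonneg (hη k) (sq_nonneg ‖D k‖))
    linarith [hbelow (θ k)]

theorem spring_gradient_sq_le (hlam : 0 ≤ lam) (hmu : 0 ≤ mu) {c : ℝ}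
    (hSbound : ∀ x, ‖S x‖ ≤ c)
    (hη : ∀ k, 0 ≤ η k) (hηmono : ∀ k, η (k + 1) ≤ η k)
    (hrec : ∀ k, lam • D (k + 1) + S (θ k) (D (k + 1))
      = (lam * mu) • D k - (2 : ℝ)⁻¹ • ∇ L (θ k))
    (k : ℕ) :
    η (k + 1) * ‖∇ L (θ (k + 1))‖ ^ 2 ≤ 8 * (lam * mu) ^ 2 * (η k * ‖D (k + 1)‖ ^ 2)
      + 8 * (lam + c) ^ 2 * (η (k + 1) * ‖D (k + 1 + 1)‖ ^ 2) := by
  have hg := norm_sq_le_of_spring_step (hrec (k + 1)) hlam hmu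
    ((S _).le_of_opNorm_le (hSbound _) _)
  have hmono := mul_le_mul_of_nonneg_left
    (mul_le_mul_of_nonneg_right (hηmono k) (sq_nonneg ‖D (k + 1)‖))
    (by positivity : (0 : ℝ) ≤ 8 * (lam * mu) ^ 2)
  nlinarith [mul_le_mul_of_nonneg_left hg (hη (k + 1))]

end SpringTrajectory

theorem stmt6_general {n : ℕ} (lam mu Cg Cm Egs : ℝ) (hlam : 0 < lam) (hmu0 : 0 ≤ mu) (hmu1 : mu < 1)
    (hCg : 0 < Cg)
    (L : EuclideanSpace ℝ (Fin n) → ℝ) (hdiff : Differentiable ℝ L)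
    (hbelow : ∀ θ, Egs ≤ L θ)
    (hlip : ∀ θ θ', ‖gradient L θ - gradient L θ'‖ ≤ Cg * ‖θ - θ'‖)
    (S : EuclideanSpace ℝ (Fin n) → EuclideanSpace ℝ (Fin n) →L[ℝ] EuclideanSpace ℝ (Fin n))
    (hSpos : ∀ θ v, 0 ≤ (inner ℝ (S θ v) v : ℝ))
    (hSbound : ∀ θ, ‖S θ‖ ≤ Real.sqrt Cm)
    (η : ℕ → ℝ) (hηpos : ∀ k, 0 < η k) (hηmono : ∀ k, η (k + 1) ≤ η k)
    (hη0 : η 0 ≤ 2 * lam * (1 - mu) / Cg)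
    (θ D : ℕ → EuclideanSpace ℝ (Fin n))
    (hrec : ∀ k, lam • D (k + 1) + S (θ k) (D (k + 1))
      = (lam * mu) • D k - (2 : ℝ)⁻¹ • gradient L (θ k))
    (hstep : ∀ k, θ (k + 1) = θ k + η k • D (k + 1)) :
    ∃ C > 0, ∀ K, 1 ≤ K →
      ∑ k ∈ Finset.Icc 1 K, η k * ‖gradient L (θ k)‖ ^ 2 ≤ C := by
  have hη k : 0 ≤ η k := (hηpos k).le
  have hηCg k : Cg * η k ≤ 2 * lam * (1 - mu) := by
    rw [le_div_iff₀ hCg] at hη0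
    nlinarith [antitone_nat_of_succ_le hηmono (Nat.zero_le k)]
  have hdamp : 0 < lam * (1 - mu) := mul_pos hlam (by linarith)
  set A := (L (θ 0) + lam * mu * (η 0 * ‖D 0‖ ^ 2) - Egs) / (lam * (1 - mu))
  have hA N : ∑ k ∈ range N, η k * ‖D (k + 1)‖ ^ 2 ≤ A := by
    rw [le_div_iff₀ hdamp, mul_comm]
    exact spring_sum_le hdiff hlip hbelow hlam.le hmu0 hSpos hη hηmono hηCg hrec hstep N
  have hA0 : 0 ≤ A := by simpa using hA 0
  refine ⟨(8 * (lam * mu) ^ 2 + 8 * (lam + √Cm) ^ 2) * A + 1,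
    add_pos_of_nonneg_of_pos (mul_nonneg (by positivity) hA0) one_pos, fun K _ ↦ ?_⟩
  have := sum_Icc_le_of_le_mul_add_mul (b := fun k ↦ η k * ‖∇ L (θ k)‖ ^ 2)
    (B := 8 * (lam * mu) ^ 2) (B' := 8 * (lam + √Cm) ^ 2)
    (fun k ↦ mul_nonneg (hη k) (sq_nonneg ‖D (k + 1)‖)) hA
    (by positivity) (by positivity) (spring_gradient_sq_le hlam.le hmu0 hSbound hη hηmono hrec) K
  linarith

/-- deterministic SPRING with `0 ≤ μ < 1`: there is a constant `C > 0` such that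
`∑_{k=1}^K η_k ‖g(θ_k)‖² ≤ C` for all `K ≥ 1`.  Here `D k` denotes `Δθ_{k-1}`. -/
theorem stmt6 {n : ℕ} (lam mu Cg Cm Egs : ℝ) (hlam : 0 < lam) (hmu0 : 0 ≤ mu) (hmu1 : mu < 1)
    (hCg : 0 < Cg) (hCm : 0 < Cm)
    (L : EuclideanSpace ℝ (Fin n) → ℝ) (hdiff : Differentiable ℝ L)
    (hbelow : ∀ θ, Egs ≤ L θ)
    (hlip : ∀ θ θ', ‖gradient L θ - gradient L θ'‖ ≤ Cg * ‖θ - θ'‖)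
    (hgbound : ∀ θ, ‖gradient L θ‖ ≤ 2 * Real.sqrt Cm)
    (S : EuclideanSpace ℝ (Fin n) → EuclideanSpace ℝ (Fin n) →L[ℝ] EuclideanSpace ℝ (Fin n))
    (hSsymm : ∀ θ v w, (inner ℝ (S θ v) w : ℝ) = inner ℝ v (S θ w))
    (hSpos : ∀ θ v, 0 ≤ (inner ℝ (S θ v) v : ℝ))
    (hSbound : ∀ θ, ‖S θ‖ ≤ Real.sqrt Cm)
    (η : ℕ → ℝ) (hηpos : ∀ k, 0 < η k) (hηmono : ∀ k, η (k + 1) ≤ η k)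
    (hη0 : η 0 ≤ 2 * lam * (1 - mu) / Cg)
    (θ D : ℕ → EuclideanSpace ℝ (Fin n))
    (hrec : ∀ k, lam • D (k + 1) + S (θ k) (D (k + 1))
      = (lam * mu) • D k - (2 : ℝ)⁻¹ • gradient L (θ k))
    (hstep : ∀ k, θ (k + 1) = θ k + η k • D (k + 1)) :
    ∃ C > 0, ∀ K, 1 ≤ K →
      ∑ k ∈ Finset.Icc 1 K, η k * ‖gradient L (θ k)‖ ^ 2 ≤ C :=
  stmt6_general lam mu Cg Cm Egs hlam hmu0 hmu1 hCg L hdiff hbelow hlip S hSpos hSbound η hηpos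
    hηmono hη0 θ D hrec hstep
end

section
/- Let S ∈ ℝ^{n×n} be fixed symmetric positive semidefinite with kernel projector P. Consider the recursion Δθ_k = (λI + S)⁻¹(λμ Δθ_{k−1} − (1/2)g_k), where each g_k lies in the range of S. Then P Δθ_k = μ^k P Δθ₀ for all k ≥ 0, and the iterate θ_{k+1} = θ₀ + ∑_{m=0}^k η_m Δθ_m satisfies P θ_{k+1} = P θ₀ + (∑_{m=0}^k η_m μ^m) P Δθ₀. -/
open Submodule LinearMap

theorem LinearMap.IsSymmetric.starProjection_ker_apply_of_mem_range {𝕜 E : Type*} [RCLike 𝕜]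
    [NormedAddCommGroup E] [InnerProductSpace 𝕜 E] {T : E →ₗ[𝕜] E} (hT : T.IsSymmetric)
    [(ker T).HasOrthogonalProjection] {v : E} (hv : v ∈ range T) :
    (ker T).starProjection v = 0 :=
  (starProjection_apply_eq_zero_iff _).mpr (hT.orthogonal_range ▸ le_orthogonal_orthogonal _ hv)

theorem eq_pow_smul_of_smul_succ {K M : Type*} [Field K] [AddCommGroup M] [Module K M]
    {lam mu : K} (hlam : lam ≠ 0) {u : ℕ → M} (h : ∀ k, lam • u (k + 1) = (lam * mu) • u k) :
    ∀ k, u k = mu ^ k • u 0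
  | 0 => by rw [pow_zero, one_smul]
  | k + 1 => by
    have hstep : u (k + 1) = mu • u k := by
      rw [← smul_right_injective M hlam |>.eq_iff, h k, mul_smul]
    rw [hstep, eq_pow_smul_of_smul_succ hlam h k, smul_smul, pow_succ']

theorem stmt9_general {n : ℕ} (lam mu : ℝ) (hlam : 0 < lam)
    (S : EuclideanSpace ℝ (Fin n) →L[ℝ] EuclideanSpace ℝ (Fin n))
    (hSsymm : ∀ v w, (inner ℝ (S v) w : ℝ) = inner ℝ v (S w))
    (P : EuclideanSpace ℝ (Fin n) →L[ℝ] EuclideanSpace ℝ (Fin n))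
    (hP : P = (LinearMap.ker (S : EuclideanSpace ℝ (Fin n) →ₗ[ℝ] EuclideanSpace ℝ (Fin n))).subtypeL.comp (Submodule.orthogonalProjectionOnto (LinearMap.ker (S : EuclideanSpace ℝ (Fin n) →ₗ[ℝ] EuclideanSpace ℝ (Fin n)))))
    (g : ℕ → EuclideanSpace ℝ (Fin n))
    (hg : ∀ k, g k ∈ LinearMap.range (S : EuclideanSpace ℝ (Fin n) →ₗ[ℝ] EuclideanSpace ℝ (Fin n)))
    (η : ℕ → ℝ) (D θ : ℕ → EuclideanSpace ℝ (Fin n))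
    (hrec : ∀ k, lam • D (k + 1) + S (D (k + 1)) = (lam * mu) • D k - (2 : ℝ)⁻¹ • g (k + 1))
    (hθ : ∀ k, θ (k + 1) = θ 0 + ∑ m ∈ Finset.range (k + 1), η m • D m) :
    (∀ k, P (D k) = mu ^ k • P (D 0)) ∧
    (∀ k, P (θ (k + 1)) = P (θ 0) + (∑ m ∈ Finset.range (k + 1), η m * mu ^ m) • P (D 0)) := by
  have hS : (S : EuclideanSpace ℝ (Fin n) →ₗ[ℝ] EuclideanSpace ℝ (Fin n)).IsSymmetric :=
    fun v w => hSsymm v w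
  have hP_range : ∀ v ∈ range (S : EuclideanSpace ℝ (Fin n) →ₗ[ℝ] EuclideanSpace ℝ (Fin n)),
      P v = 0 := fun v hv => hP ▸ hS.starProjection_ker_apply_of_mem_range hv
  have hstep : ∀ k, lam • P (D (k + 1)) = (lam * mu) • P (D k) := by
    intro k
    have hPS : P (S (D (k + 1))) = 0 := hP_range _ (mem_range_self _ _)
    simpa [hPS, hP_range _ (hg (k + 1))] using congrArg P (hrec k)
  have hD := eq_pow_smul_of_smul_succ (u := fun k => P (D k)) hlam.ne' hstep
  refine ⟨hD, fun k => ?_⟩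
  rw [hθ k, map_add, map_sum, Finset.sum_smul]
  congr 1
  refine Finset.sum_congr rfl fun m _ => ?_
  rw [map_smul, hD m, smul_smul]

/-- fixed-SR-matrix SPRING recursion. `P` is the orthogonal projection onto
`ker S`; each `g k` lies in `ran S`.  Then `P Δθ_k = μ^k P Δθ₀` and
`P θ_{k+1} = P θ₀ + (∑_{m=0}^k η_m μ^m) P Δθ₀`. -/
theorem stmt9 {n : ℕ} (lam mu : ℝ) (hlam : 0 < lam) (hmu0 : 0 ≤ mu) (hmu1 : mu ≤ 1)
    (S : EuclideanSpace ℝ (Fin n) →L[ℝ] EuclideanSpace ℝ (Fin n))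
    (hSsymm : ∀ v w, (inner ℝ (S v) w : ℝ) = inner ℝ v (S w))
    (hSpos : ∀ v, 0 ≤ (inner ℝ (S v) v : ℝ))
    (P : EuclideanSpace ℝ (Fin n) →L[ℝ] EuclideanSpace ℝ (Fin n))
    (hP : P = (LinearMap.ker (S : EuclideanSpace ℝ (Fin n) →ₗ[ℝ] EuclideanSpace ℝ (Fin n))).subtypeL.comp (Submodule.orthogonalProjectionOnto (LinearMap.ker (S : EuclideanSpace ℝ (Fin n) →ₗ[ℝ] EuclideanSpace ℝ (Fin n)))))
    (g : ℕ → EuclideanSpace ℝ (Fin n))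
    (hg : ∀ k, g k ∈ LinearMap.range (S : EuclideanSpace ℝ (Fin n) →ₗ[ℝ] EuclideanSpace ℝ (Fin n)))
    (η : ℕ → ℝ) (D θ : ℕ → EuclideanSpace ℝ (Fin n))
    (hrec : ∀ k, lam • D (k + 1) + S (D (k + 1)) = (lam * mu) • D k - (2 : ℝ)⁻¹ • g (k + 1))
    (hθ : ∀ k, θ (k + 1) = θ 0 + ∑ m ∈ Finset.range (k + 1), η m • D m) :
    (∀ k, P (D k) = mu ^ k • P (D 0)) ∧
    (∀ k, P (θ (k + 1)) = P (θ 0) + (∑ m ∈ Finset.range (k + 1), η m * mu ^ m) • P (D 0)) :=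
  stmt9_general lam mu hlam S hSsymm P hP g hg η D θ hrec hθ
end

section
/- In the fixed-SR-matrix SPRING recursion with μ = 1, if P Δθ₀ ≠ 0 and ∑_{m=0}^∞ η_m = ∞, then ‖θ_k‖ → ∞; more precisely, ‖θ_{k+1}‖ ≥ (∑_{m=0}^k η_m)·‖PΔθ₀‖ − ‖Pθ₀‖, so ‖θ_k‖ grows at least like ∑ η_m. -/
/-!
Applying the projection `P` onto `ker S` to the recursion kills `S Δθ_k` and `g_k`, since for
symmetric `S` the range of `S` is orthogonal to its kernel. Hence `λ PΔθ_{k+1} = λ PΔθ_k`, so the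
kernel component of the update never changes, and `Pθ_{k+1} = Pθ₀ + (∑_{m ≤ k} η_m) PΔθ₀`.
As `P` is a contraction, this component bounds `‖θ_{k+1}‖` from below, and it diverges with
`∑ η_m` as soon as `PΔθ₀ ≠ 0`.
-/

open Filter Finset

theorem LinearMap.IsSymmetric.range_le_ker_starProjection_ker {E : Type*}
    [NormedAddCommGroup E] [InnerProductSpace ℝ E] {T : E →ₗ[ℝ] E} (hT : T.IsSymmetric)
    [(LinearMap.ker T).HasOrthogonalProjection] :
    LinearMap.range T ≤ LinearMap.ker ((LinearMap.ker T).starProjection : E →ₗ[ℝ] E) := by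
  intro v hv
  rw [LinearMap.mem_ker, ContinuousLinearMap.coe_coe, Submodule.starProjection_apply_eq_zero_iff,
    ← hT.orthogonal_range]
  exact Submodule.le_orthogonal_orthogonal _ hv

section Recurrence

variable {R M N : Type*} [Field R] [AddCommGroup M] [Module R M] [AddCommGroup N] [Module R N]
  {Q : M →ₗ[R] N} {S : M →ₗ[R] M} {lam c : R} {g D : ℕ → M}

theorem map_eq_map_zero_of_recurrence (hQ : LinearMap.range S ≤ LinearMap.ker Q) (hlam : lam ≠ 0)
    (hg : ∀ k, g k ∈ LinearMap.range S)
    (hrec : ∀ k, lam • D (k + 1) + S (D (k + 1)) = lam • D k - c • g (k + 1)) (k : ℕ) :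
    Q (D k) = Q (D 0) := by
  induction k with
  | zero => rfl
  | succ k ih =>
    have hstep := congrArg Q (hrec k)
    simp only [map_add, map_sub, map_smul, LinearMap.mem_ker.mp (hQ (LinearMap.mem_range_self S _)),
      LinearMap.mem_ker.mp (hQ (hg (k + 1))), smul_zero, add_zero, sub_zero] at hstep
    rw [smul_right_injective N hlam hstep, ih]

theorem map_add_sum_smul_of_recurrence (hQ : LinearMap.range S ≤ LinearMap.ker Q)
    (hlam : lam ≠ 0) (hg : ∀ k, g k ∈ LinearMap.range S)
    (hrec : ∀ k, lam • D (k + 1) + S (D (k + 1)) = lam • D k - c • g (k + 1))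
    (x : M) (η : ℕ → R) (s : Finset ℕ) :
    Q (x + ∑ m ∈ s, η m • D m) = Q x + (∑ m ∈ s, η m) • Q (D 0) := by
  simp only [map_add, map_sum, map_smul, map_eq_map_zero_of_recurrence hQ hlam hg hrec, sum_smul]

end Recurrence

theorem Submodule.mul_norm_sub_norm_le_of_starProjection_eq {E : Type*}
    [NormedAddCommGroup E] [InnerProductSpace ℝ E] (K : Submodule ℝ E) [K.HasOrthogonalProjection]
    {x a b : E} {t : ℝ} (ht : 0 ≤ t) (hx : K.starProjection x = a + t • b) :
    t * ‖b‖ - ‖a‖ ≤ ‖x‖ := by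
  have hsub : t • b = K.starProjection x - a := by rw [hx, add_sub_cancel_left]
  have hnorm : t * ‖b‖ ≤ ‖K.starProjection x‖ + ‖a‖ := by
    rw [← Real.norm_of_nonneg ht, ← norm_smul, hsub]
    exact norm_sub_le _ _
  linarith [K.norm_starProjection_apply_le x]

theorem stmt10_general {n : ℕ} (lam : ℝ) (hlam : 0 < lam)
    (S : EuclideanSpace ℝ (Fin n) →L[ℝ] EuclideanSpace ℝ (Fin n))
    (hSsymm : ∀ v w, (inner ℝ (S v) w : ℝ) = inner ℝ v (S w))
    (P : EuclideanSpace ℝ (Fin n) →L[ℝ] EuclideanSpace ℝ (Fin n))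
    (hP : P = (LinearMap.ker (S : EuclideanSpace ℝ (Fin n) →ₗ[ℝ] EuclideanSpace ℝ (Fin n))).subtypeL.comp
      (LinearMap.ker (S : EuclideanSpace ℝ (Fin n) →ₗ[ℝ] EuclideanSpace ℝ (Fin n))).orthogonalProjectionOnto)
    (g : ℕ → EuclideanSpace ℝ (Fin n))
    (hg : ∀ k, g k ∈ LinearMap.range (S : EuclideanSpace ℝ (Fin n) →ₗ[ℝ] EuclideanSpace ℝ (Fin n)))
    (η : ℕ → ℝ) (hη : ∀ m, 0 < η m)
    (hdiv : Filter.Tendsto (fun k => ∑ m ∈ Finset.range (k + 1), η m) Filter.atTop Filter.atTop)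
    (D θ : ℕ → EuclideanSpace ℝ (Fin n))
    (hrec : ∀ k, lam • D (k + 1) + S (D (k + 1)) = lam • D k - (2 : ℝ)⁻¹ • g (k + 1))
    (hθ : ∀ k, θ (k + 1) = θ 0 + ∑ m ∈ Finset.range (k + 1), η m • D m)
    (hPD0 : P (D 0) ≠ 0) :
    (∀ k, (∑ m ∈ Finset.range (k + 1), η m) * ‖P (D 0)‖ - ‖P (θ 0)‖ ≤ ‖θ (k + 1)‖) ∧
    Filter.Tendsto (fun k => ‖θ k‖) Filter.atTop Filter.atTop := by
  set K := LinearMap.ker (S : EuclideanSpace ℝ (Fin n) →ₗ[ℝ] EuclideanSpace ℝ (Fin n))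
  change P = K.starProjection at hP
  subst hP
  have hrange := LinearMap.IsSymmetric.range_le_ker_starProjection_ker (T := S.toLinearMap) hSsymm
  have bound (k : ℕ) :
      (∑ m ∈ range (k + 1), η m) * ‖K.starProjection (D 0)‖ - ‖K.starProjection (θ 0)‖ ≤
        ‖θ (k + 1)‖ :=
    K.mul_norm_sub_norm_le_of_starProjection_eq (sum_nonneg fun m _ => (hη m).le) <| by
      rw [hθ k]
      exact map_add_sum_smul_of_recurrence (Q := K.starProjection.toLinearMap) hrange hlam.ne' hg
        hrec _ η _
  refine ⟨bound, (tendsto_add_atTop_iff_nat 1).mp <| tendsto_atTop_mono bound ?_⟩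
  exact tendsto_atTop_add_const_right _ _ (hdiv.atTop_mul_const (norm_pos_iff.mpr hPD0))

/-- fixed-SR-matrix SPRING with `μ = 1`: if `P Δθ₀ ≠ 0` and the step-sizes are
positive with divergent sum, then `‖θ_{k+1}‖ ≥ (∑_{m=0}^k η_m)‖PΔθ₀‖ − ‖Pθ₀‖` and
`‖θ_k‖ → ∞`. -/
theorem stmt10 {n : ℕ} (lam : ℝ) (hlam : 0 < lam)
    (S : EuclideanSpace ℝ (Fin n) →L[ℝ] EuclideanSpace ℝ (Fin n))
    (hSsymm : ∀ v w, (inner ℝ (S v) w : ℝ) = inner ℝ v (S w))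
    (hSpos : ∀ v, 0 ≤ (inner ℝ (S v) v : ℝ))
    (P : EuclideanSpace ℝ (Fin n) →L[ℝ] EuclideanSpace ℝ (Fin n))
    (hP : P = (LinearMap.ker (S : EuclideanSpace ℝ (Fin n) →ₗ[ℝ] EuclideanSpace ℝ (Fin n))).subtypeL.comp
      (LinearMap.ker (S : EuclideanSpace ℝ (Fin n) →ₗ[ℝ] EuclideanSpace ℝ (Fin n))).orthogonalProjectionOnto)
    (g : ℕ → EuclideanSpace ℝ (Fin n))
    (hg : ∀ k, g k ∈ LinearMap.range (S : EuclideanSpace ℝ (Fin n) →ₗ[ℝ] EuclideanSpace ℝ (Fin n)))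
    (η : ℕ → ℝ) (hη : ∀ m, 0 < η m)
    (hdiv : Filter.Tendsto (fun k => ∑ m ∈ Finset.range (k + 1), η m) Filter.atTop Filter.atTop)
    (D θ : ℕ → EuclideanSpace ℝ (Fin n))
    (hrec : ∀ k, lam • D (k + 1) + S (D (k + 1)) = lam • D k - (2 : ℝ)⁻¹ • g (k + 1))
    (hθ : ∀ k, θ (k + 1) = θ 0 + ∑ m ∈ Finset.range (k + 1), η m • D m)
    (hPD0 : P (D 0) ≠ 0) :
    (∀ k, (∑ m ∈ Finset.range (k + 1), η m) * ‖P (D 0)‖ - ‖P (θ 0)‖ ≤ ‖θ (k + 1)‖) ∧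
    Filter.Tendsto (fun k => ‖θ k‖) Filter.atTop Filter.atTop :=
  stmt10_general lam hlam S hSsymm P hP g hg η hη hdiv D θ hrec hθ hPD0
end

section
/- Let O ∈ ℝ^{p×s} satisfy O·𝟙 = 0, where 𝟙 ∈ ℝ^s is the all-ones vector, and let λ > 0. Then O(λI + OᵀO + (1/s)𝟙𝟙ᵀ)⁻¹ = O(λI + OᵀO)⁻¹. -/
/-!
Because `O 𝟙 = 0`, the matrix `J = 𝟙𝟙ᵀ` satisfies `O J = 0`, so `A = λI + OᵀO` acts on `J` as
the scalar `λ`, i.e. `A⁻¹ J = λ⁻¹ J` and hence `O A⁻¹ J = 0`. Then `O A⁻¹ (A + J/s) = O`, and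
multiplying on the right by `(A + J/s)⁻¹` gives the claim. Both inverses exist because `A` is
positive definite and `J/s` is positive semidefinite.
-/

open Matrix

namespace Matrix

variable {m n K : Type*} [Fintype n] [DecidableEq n] [Field K]

theorem mul_inv_add_of_mul_inv_mul_eq_zero {X : Matrix m n K} {A E : Matrix n n K}
    (hA : IsUnit A.det) (hAE : IsUnit (A + E).det) (h : X * A⁻¹ * E = 0) :
    X * (A + E)⁻¹ = X * A⁻¹ := by
  have hX : X * A⁻¹ * (A + E) = X := by
    rw [Matrix.mul_add, h, add_zero, Matrix.mul_assoc, nonsing_inv_mul _ hA, Matrix.mul_one]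
  calc X * (A + E)⁻¹ = X * A⁻¹ * (A + E) * (A + E)⁻¹ := by rw [hX]
    _ = X * A⁻¹ := by rw [Matrix.mul_assoc _ (A + E), mul_nonsing_inv _ hAE, Matrix.mul_one]

theorem inv_mul_eq_inv_smul_of_mul_eq_smul {A : Matrix n n K} {J : Matrix n m K} {c : K}
    (hA : IsUnit A.det) (hc : c ≠ 0) (hAJ : A * J = c • J) : A⁻¹ * J = c⁻¹ • J := by
  have hJ : c • (A⁻¹ * J) = J := by
    rw [← Matrix.mul_smul, ← hAJ, ← Matrix.mul_assoc, nonsing_inv_mul _ hA, Matrix.one_mul]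
  rw [← smul_right_inj hc, hJ, smul_smul, mul_inv_cancel₀ hc, one_smul]

end Matrix

/-- SPRING's rank-one stabilization: if `O 𝟙 = 0` and `λ > 0`, then
`O (λI + OᵀO + (1/s) 𝟙𝟙ᵀ)⁻¹ = O (λI + OᵀO)⁻¹`. -/
theorem stmt17 {p s : ℕ} (O : Matrix (Fin p) (Fin s) ℝ) (lam : ℝ) (hlam : 0 < lam)
    (hO : O.mulVec (fun _ => 1) = 0) :
    O * (lam • (1 : Matrix (Fin s) (Fin s) ℝ) + Oᵀ * O
          + (s : ℝ)⁻¹ • Matrix.of (fun _ _ => (1 : ℝ)))⁻¹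
      = O * (lam • (1 : Matrix (Fin s) (Fin s) ℝ) + Oᵀ * O)⁻¹ := by
  set J : Matrix (Fin s) (Fin s) ℝ := Matrix.of (fun _ _ => 1)
  set A : Matrix (Fin s) (Fin s) ℝ := lam • 1 + Oᵀ * O
  have hJ : J = vecMulVec (fun _ => 1) (star fun _ => 1) := by ext; simp [J, vecMulVec]
  have hOJ : O * J = 0 := by ext i j; simpa [mulVec, dotProduct, J, mul_apply] using congrFun hO i
  have hAJ : A * J = lam • J := by
    rw [Matrix.add_mul, Matrix.mul_assoc, hOJ, Matrix.mul_zero, add_zero, Matrix.smul_mul,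
      Matrix.one_mul]
  have hApos : A.PosDef :=
    (PosDef.one.smul hlam).add_posSemidef (by simpa using posSemidef_conjTranspose_mul_self O)
  have hJpos : ((s : ℝ)⁻¹ • J).PosSemidef :=
    hJ ▸ (posSemidef_vecMulVec_self_star _).smul (by positivity)
  have hA : IsUnit A.det := hApos.isUnit.map detMonoidHom
  have hB : IsUnit (A + (s : ℝ)⁻¹ • J).det := (hApos.add_posSemidef hJpos).isUnit.map detMonoidHom
  refine mul_inv_add_of_mul_inv_mul_eq_zero hA hB ?_
  rw [Matrix.mul_smul, Matrix.mul_assoc, inv_mul_eq_inv_smul_of_mul_eq_smul hA hlam.ne' hAJ,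
    Matrix.mul_smul, hOJ, smul_zero, smul_zero]
end
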